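/- Let M be a refinement monoid. Then the set of order-ideals of M, ordered by inclusion, is a lattice in which the meet of I and J is I ∩ J and the join of I and J is {x ∈ M : x ≤ y + z for some y ∈ I and z ∈ J}, and this lattice is distributive. -/

import Mathlib

/-- The algebraic preorder on a commutative monoid: `x ≤ y` iff `∃ z, y = x + z`. -/
def AlgLE {M : Type*} [AddCommMonoid M] (x y : M) : Prop := ∃ z, y = x + z

/-- A monoid is conical if `x + y = 0` implies `x = 0` and `y = 0`. -/
def IsConical (M : Type*) [AddCommMonoid M] : Prop := ∀ x y : M, x + y = 0 → x = 0 ∧ y = 0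

/-- A refinement monoid: every equality `a + b = c + d` admits a refinement. -/
def IsRefinement (M : Type*) [AddCommMonoid M] : Prop :=
  ∀ a b c d : M, a + b = c + d →
    ∃ x y z w : M, a = x + y ∧ b = z + w ∧ c = x + z ∧ d = y + w

/-- Separative: `a + a = a + b` and `b + b = a + b` imply `a = b`. -/
def IsSeparative (M : Type*) [AddCommMonoid M] : Prop :=
  ∀ a b : M, a + a = a + b → b + b = a + b → a = b

/-- A prime element: `p ≠ 0` and `p ≤ a + b` implies `p ≤ a` or `p ≤ b`
(algebraic preorder). -/
def IsPrimeElem {M : Type*} [AddCommMonoid M] (p : M) : Prop :=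
  p ≠ 0 ∧ ∀ a b : M, AlgLE p (a + b) → AlgLE p a ∨ AlgLE p b

/-- Primely generated: every element is a finite sum of prime elements. -/
def PrimelyGenerated (M : Type*) [AddCommMonoid M] : Prop :=
  ∀ x : M, ∃ l : Multiset M, (∀ p ∈ l, IsPrimeElem p) ∧ x = l.sum

/-- Antisymmetric: the algebraic preorder is a partial order. -/
def IsAntisymmetric (M : Type*) [AddCommMonoid M] : Prop :=
  ∀ x y : M, AlgLE x y → AlgLE y x → x = y

/-- A primitive monoid: an antisymmetric, primely generated refinement monoid. -/
def IsPrimitive (M : Type*) [AddCommMonoid M] : Prop :=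
  IsAntisymmetric M ∧ PrimelyGenerated M ∧ IsRefinement M

/-- An order-ideal of `M`: a submonoid closed under going down in the algebraic
preorder. -/
def IsOrderIdeal {M : Type*} [AddCommMonoid M] (I : Set M) : Prop :=
  (0 : M) ∈ I ∧ (∀ x y : M, x ∈ I → y ∈ I → x + y ∈ I) ∧
    ∀ x y : M, AlgLE x y → y ∈ I → x ∈ I

/-- The join of two order-ideals: `{x ∣ x ≤ y + z for some y ∈ I, z ∈ J}`. -/
def idealJoin {M : Type*} [AddCommMonoid M] (I J : Set M) : Set M :=
  {x : M | ∃ y ∈ I, ∃ z ∈ J, AlgLE x (y + z)}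

/-!
Given `x ≤ y + z`, refinement splits `x` as `p + q` with `p ≤ y` and `q ≤ z` (Riesz
decomposition). If moreover `x ∈ I`, then `p, q ∈ I` since they lie below `x`, so
`x ∈ I ∩ (J ∨ K)` already lies in `(I ∩ J) ∨ (I ∩ K)`; the other inclusion holds in any monoid.
-/

section AlgLE

variable {M : Type*} [AddCommMonoid M] {x y z w : M}

theorem AlgLE.refl (x : M) : AlgLE x x := ⟨0, (add_zero x).symm⟩

theorem AlgLE.trans (hxy : AlgLE x y) (hyz : AlgLE y z) : AlgLE x z := by
  obtain ⟨a, rfl⟩ := hxy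
  obtain ⟨b, rfl⟩ := hyz
  exact ⟨a + b, add_assoc x a b⟩

theorem AlgLE.add (hxy : AlgLE x y) (hzw : AlgLE z w) : AlgLE (x + z) (y + w) := by
  obtain ⟨a, rfl⟩ := hxy
  obtain ⟨b, rfl⟩ := hzw
  exact ⟨a + b, add_add_add_comm x a z b⟩

theorem algLE_add_right (x y : M) : AlgLE x (x + y) := ⟨y, rfl⟩

theorem algLE_add_left (x y : M) : AlgLE y (x + y) := ⟨x, add_comm x y⟩

theorem IsRefinement.exists_add_eq_of_algLE_add (href : IsRefinement M)
    (h : AlgLE x (y + z)) : ∃ p q, x = p + q ∧ AlgLE p y ∧ AlgLE q z := by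
  obtain ⟨w, hw⟩ := h
  obtain ⟨p, q, r, s, hx, -, hy, hz⟩ := href x w y z hw.symm
  exact ⟨p, q, hx, ⟨r, hy⟩, ⟨s, hz⟩⟩

end AlgLE

namespace IsOrderIdeal

variable {M : Type*} [AddCommMonoid M] {I J : Set M}

theorem zero_mem (hI : IsOrderIdeal I) : (0 : M) ∈ I := hI.1

theorem add_mem (hI : IsOrderIdeal I) {x y : M} (hx : x ∈ I) (hy : y ∈ I) : x + y ∈ I :=
  hI.2.1 x y hx hy

theorem mem_of_algLE (hI : IsOrderIdeal I) {x y : M} (hxy : AlgLE x y) (hy : y ∈ I) : x ∈ I :=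
  hI.2.2 x y hxy hy

theorem inter (hI : IsOrderIdeal I) (hJ : IsOrderIdeal J) : IsOrderIdeal (I ∩ J) :=
  ⟨⟨hI.zero_mem, hJ.zero_mem⟩, fun _ _ hx hy => ⟨hI.add_mem hx.1 hy.1, hJ.add_mem hx.2 hy.2⟩,
    fun _ _ hxy hy => ⟨hI.mem_of_algLE hxy hy.1, hJ.mem_of_algLE hxy hy.2⟩⟩

theorem idealJoin (hI : IsOrderIdeal I) (hJ : IsOrderIdeal J) : IsOrderIdeal (idealJoin I J) := by
  refine ⟨⟨0, hI.zero_mem, 0, hJ.zero_mem, algLE_add_right 0 0⟩, ?_, ?_⟩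
  · rintro x₁ x₂ ⟨y₁, hy₁, z₁, hz₁, h₁⟩ ⟨y₂, hy₂, z₂, hz₂, h₂⟩
    refine ⟨y₁ + y₂, hI.add_mem hy₁ hy₂, z₁ + z₂, hJ.add_mem hz₁ hz₂, ?_⟩
    rw [add_add_add_comm]
    exact h₁.add h₂
  · rintro x x' hxx' ⟨y, hy, z, hz, h⟩
    exact ⟨y, hy, z, hz, hxx'.trans h⟩

end IsOrderIdeal

section idealJoin

variable {M : Type*} [AddCommMonoid M] {I J K : Set M}

theorem subset_idealJoin_left (hJ : (0 : M) ∈ J) : I ⊆ idealJoin I J :=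
  fun x hx => ⟨x, hx, 0, hJ, by rw [add_zero]; exact AlgLE.refl x⟩

theorem subset_idealJoin_right (hI : (0 : M) ∈ I) : J ⊆ idealJoin I J :=
  fun x hx => ⟨0, hI, x, hx, by rw [zero_add]; exact AlgLE.refl x⟩

theorem idealJoin_subset (hK : IsOrderIdeal K) (hIK : I ⊆ K) (hJK : J ⊆ K) :
    idealJoin I J ⊆ K :=
  fun _ ⟨_, hy, _, hz, h⟩ => hK.mem_of_algLE h (hK.add_mem (hIK hy) (hJK hz))

theorem idealJoin_inter_subset_inter_idealJoin (hI : IsOrderIdeal I) :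
    idealJoin (I ∩ J) (I ∩ K) ⊆ I ∩ idealJoin J K :=
  fun _ ⟨y, hy, z, hz, h⟩ =>
    ⟨hI.mem_of_algLE h (hI.add_mem hy.1 hz.1), y, hy.2, z, hz.2, h⟩

theorem inter_idealJoin_subset_idealJoin_inter (href : IsRefinement M) (hI : IsOrderIdeal I)
    (hJ : IsOrderIdeal J) (hK : IsOrderIdeal K) :
    I ∩ idealJoin J K ⊆ idealJoin (I ∩ J) (I ∩ K) := by
  rintro x ⟨hxI, y, hy, z, hz, h⟩
  obtain ⟨p, q, rfl, hpy, hqz⟩ := href.exists_add_eq_of_algLE_add h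
  exact ⟨p, ⟨hI.mem_of_algLE (algLE_add_right p q) hxI, hJ.mem_of_algLE hpy hy⟩,
    q, ⟨hI.mem_of_algLE (algLE_add_left p q) hxI, hK.mem_of_algLE hqz hz⟩, AlgLE.refl _⟩

theorem inter_idealJoin (href : IsRefinement M) (hI : IsOrderIdeal I) (hJ : IsOrderIdeal J)
    (hK : IsOrderIdeal K) : I ∩ idealJoin J K = idealJoin (I ∩ J) (I ∩ K) :=
  (inter_idealJoin_subset_idealJoin_inter href hI hJ hK).antisymm
    (idealJoin_inter_subset_inter_idealJoin hI)

end idealJoin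

/-- For a refinement monoid `M`, the order-ideals of `M` form a lattice under
inclusion, with meet the intersection and join `idealJoin`, and this lattice is
distributive. -/
theorem statement14 (M : Type*) [AddCommMonoid M] (href : IsRefinement M) :
    (∀ I J : Set M, IsOrderIdeal I → IsOrderIdeal J → IsOrderIdeal (I ∩ J)) ∧
    (∀ I J : Set M, IsOrderIdeal I → IsOrderIdeal J → IsOrderIdeal (idealJoin I J)) ∧
    (∀ I J : Set M, IsOrderIdeal I → IsOrderIdeal J →
      I ⊆ idealJoin I J ∧ J ⊆ idealJoin I J) ∧
    (∀ I J L : Set M, IsOrderIdeal I → IsOrderIdeal J → IsOrderIdeal L →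
      I ⊆ L → J ⊆ L → idealJoin I J ⊆ L) ∧
    (∀ I J K : Set M, IsOrderIdeal I → IsOrderIdeal J → IsOrderIdeal K →
      I ∩ idealJoin J K = idealJoin (I ∩ J) (I ∩ K)) :=
  ⟨fun _ _ hI hJ => hI.inter hJ,
    fun _ _ hI hJ => hI.idealJoin hJ,
    fun _ _ hI hJ => ⟨subset_idealJoin_left hJ.zero_mem, subset_idealJoin_right hI.zero_mem⟩,
    fun _ _ _ _ _ hL => idealJoin_subset hL,
    fun _ _ _ hI hJ hK => inter_idealJoin href hI hJ hK⟩
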